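/- Let η : X_rat → ℕ be a finitely supported function whose support is contained in some element of X_*. Then the restriction ev_η^Γ of the generalized evaluation map ev_η : g ⊗ A → (g ⊗ A)/(g ⊗ I_η) to (g ⊗ A)^Γ is surjective, and hence induces a Lie algebra isomorphism (g ⊗ A)^Γ/(g ⊗ I_η)^Γ ≅ (g ⊗ A)/(g ⊗ I_η). -/

import Mathlib

set_option linter.unusedSectionVars false

open scoped TensorProduct

noncomputable section

/-- The action of a group element on the maximal spectrum of `A`
(so that `m_{γ·x} = comap (γ⁻¹ • ·) m_x`). -/
def gammaDot (A Γ : Type*) [CommRing A] [Group Γ] [MulSemiringAction Γ A]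
    (γ : Γ) (x : MaximalSpectrum A) : MaximalSpectrum A :=
  ⟨Ideal.comap (MulSemiringAction.toRingHom Γ A γ⁻¹) x.asIdeal, by
    have := x.isMaximal
    exact Ideal.comap_isMaximal_of_surjective _ (MulAction.surjective γ⁻¹)⟩

/-- A finite set of points of `X` containing no two (distinct) points in the same
`Γ`-orbit, i.e. an element of `X_*`. -/
def NoTwoInOrbit (A Γ : Type*) [CommRing A] [Group Γ] [MulSemiringAction Γ A]
    (s : Finset (MaximalSpectrum A)) : Prop :=
  ∀ x ∈ s, ∀ y ∈ s, ∀ γ : Γ, gammaDot A Γ γ x = y → x = y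

/-- The ideal `I_η = ∏_{x ∈ Supp η} m_x ^ η x` of `A`. -/
def idealOf {A : Type*} [CommRing A] (η : MaximalSpectrum A →₀ ℕ) : Ideal A :=
  η.support.prod fun x => x.asIdeal ^ η x

variable (k A g Γ : Type*)
variable [Field k] [IsAlgClosed k] [CharZero k]
variable [CommRing A] [Algebra k A] [Algebra.FiniteType k A]
variable [LieRing g] [LieAlgebra k g] [Module.Finite k g] [LieAlgebra.IsSemisimple k g]
variable [CommGroup Γ] [Fintype Γ]
variable [MulSemiringAction Γ A] [SMulCommClass Γ k A]
variable [DistribMulAction Γ g] [SMulCommClass Γ k g]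

/-- The `k`-submodule `g ⊗ I` of `A ⊗[k] g` determined by an ideal `I ⊆ A`. -/
def gT (I : Ideal A) : Submodule k (A ⊗[k] g) :=
  Submodule.span k {z | ∃ f ∈ I, ∃ v : g, z = f ⊗ₜ[k] v}

/-- The diagonal action of `γ ∈ Γ` on `A ⊗[k] g` as a `k`-linear map. -/
def diagMap (γ : Γ) : (A ⊗[k] g) →ₗ[k] A ⊗[k] g :=
  TensorProduct.map (DistribMulAction.toLinearMap k A γ) (DistribMulAction.toLinearMap k g γ)

/-- The set of `Γ`-fixed points of `A ⊗[k] g`, i.e. the equivariant map algebra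
`(g ⊗ A)^Γ`, as a `k`-submodule. -/
def fixedSub : Submodule k (A ⊗[k] g) :=
  ⨅ γ : Γ, LinearMap.ker (diagMap k A g Γ γ - LinearMap.id)

lemma mem_fixedSub {z : A ⊗[k] g} :
    z ∈ fixedSub k A g Γ ↔ ∀ γ : Γ, diagMap k A g Γ γ z = z := by
  simp [fixedSub, sub_eq_zero, LinearMap.sub_apply]

/-- `A ⊗[k] g` is a Lie algebra over `k` (by restriction of scalars from `A`). -/
instance : LieAlgebra k (A ⊗[k] g) where
  lie_smul t x y := by
    rw [← algebraMap_smul A t y, lie_smul, algebraMap_smul]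

lemma diagMap_lie (hbr : ∀ (γ : Γ) (x y : g), γ • ⁅x, y⁆ = ⁅γ • x, γ • y⁆) (γ : Γ)
    (z w : A ⊗[k] g) :
    diagMap k A g Γ γ ⁅z, w⁆ = ⁅diagMap k A g Γ γ z, diagMap k A g Γ γ w⁆ := by
  induction z using TensorProduct.induction_on with
  | zero => simp
  | tmul a v =>
    induction w using TensorProduct.induction_on with
    | zero => simp
    | tmul b u =>
      rw [LieAlgebra.ExtendScalars.bracket_tmul]
      simp only [diagMap, TensorProduct.map_tmul, DistribMulAction.toLinearMap,
        DistribSMul.toLinearMap_apply]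
      rw [LieAlgebra.ExtendScalars.bracket_tmul, smul_mul', hbr]
    | add w1 w2 h1 h2 => rw [lie_add, map_add, h1, h2, map_add, lie_add]
  | add z1 z2 h1 h2 => rw [add_lie, map_add, h1, h2, map_add, add_lie]

/-- The equivariant map algebra `(g ⊗ A)^Γ` as a Lie subalgebra of `A ⊗[k] g`. -/
def fixedLie (hbr : ∀ (γ : Γ) (x y : g), γ • ⁅x, y⁆ = ⁅γ • x, γ • y⁆) :
    LieSubalgebra k (A ⊗[k] g) :=
  { fixedSub k A g Γ with
    lie_mem' := by
      intro x y hx hy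
      have hx' : x ∈ fixedSub k A g Γ := hx
      have hy' : y ∈ fixedSub k A g Γ := hy
      show ⁅x, y⁆ ∈ fixedSub k A g Γ
      rw [mem_fixedSub] at hx' hy' ⊢
      intro γ
      rw [diagMap_lie k A g Γ hbr, hx' γ, hy' γ] }

/-- `g ⊗ I` as a Lie ideal of `A ⊗[k] g`. -/
def gTLie (I : Ideal A) : LieIdeal k (A ⊗[k] g) :=
  { gT k A g I with
    lie_mem := by
      intro x m hm
      have hm' : m ∈ gT k A g I := hm
      show ⁅x, m⁆ ∈ gT k A g I
      clear hm
      induction hm' using Submodule.span_induction with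
      | mem z hz =>
        obtain ⟨f, hf, v, rfl⟩ := hz
        induction x using TensorProduct.induction_on with
        | zero => rw [zero_lie]; exact (gT k A g I).zero_mem
        | tmul a w =>
          rw [LieAlgebra.ExtendScalars.bracket_tmul]
          exact Submodule.subset_span ⟨a * f, I.mul_mem_left a hf, ⁅w, v⁆, rfl⟩
        | add x1 x2 h1 h2 => rw [add_lie]; exact (gT k A g I).add_mem h1 h2
      | zero => rw [lie_zero]; exact (gT k A g I).zero_mem
      | add z w _ _ h1 h2 => rw [lie_add]; exact (gT k A g I).add_mem h1 h2
      | smul c z _ h => rw [lie_smul]; exact (gT k A g I).smul_mem c h }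

variable {k A g Γ} in
/-- `(g ⊗ I)^Γ` as a Lie ideal of the equivariant map algebra `(g ⊗ A)^Γ`. -/
def fixedIdealOf (hbr : ∀ (γ : Γ) (x y : g), γ • ⁅x, y⁆ = ⁅γ • x, γ • y⁆) (I : Ideal A) :
    LieIdeal k ↥(fixedLie k A g Γ hbr) where
  carrier := {y | (y : A ⊗[k] g) ∈ gT k A g I}
  add_mem' := fun ha hb => (gT k A g I).add_mem ha hb
  zero_mem' := (gT k A g I).zero_mem
  smul_mem' := fun c y hy => by
    simpa using (gT k A g I).smul_mem c hy
  lie_mem := fun {x m} hm => (gTLie k A g I).lie_mem hm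

/-! Since the points of `Supp η` lie in distinct free `Γ`-orbits, `I_η` is coprime to each of its
nontrivial translates `γ • I_η`, and the Chinese remainder theorem gives `e ∈ A` with `e ≡ 1` and
`γ • e ≡ 0 (mod I_η)` for `γ ≠ 1`. For any `z ∈ g ⊗ A` the average `∑ γ, γ • (e z)` is then
`Γ`-fixed and congruent to `z` modulo `g ⊗ I_η`; the isomorphism is the first isomorphism
theorem. -/

open scoped Pointwise

section IdealTranslates

variable {R G : Type*} [CommRing R] [Group G] [MulSemiringAction G R]

theorem Ideal.exists_sub_one_mem_and_smul_mem [Finite G] {I : Ideal R}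
    (hI : ∀ γ : G, γ ≠ 1 → IsCoprime I (γ • I)) :
    ∃ e : R, e - 1 ∈ I ∧ ∀ γ : G, γ ≠ 1 → γ • e ∈ I := by
  classical
  have := Fintype.ofFinite G
  have hcop : IsCoprime I (∏ γ ∈ Finset.univ.erase (1 : G), γ⁻¹ • I) :=
    IsCoprime.prod_right fun γ hγ => hI γ⁻¹ (inv_ne_one.mpr (Finset.ne_of_mem_erase hγ))
  obtain ⟨i, hi, e, he, hie⟩ := Ideal.isCoprime_iff_exists.mp hcop
  refine ⟨e, by simpa [← hie] using I.neg_mem hi, fun γ hγ => ?_⟩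
  have hle : ∏ δ ∈ Finset.univ.erase (1 : G), δ⁻¹ • I ≤ γ⁻¹ • I :=
    Ideal.prod_le_inf.trans (Finset.inf_le (Finset.mem_erase.mpr ⟨hγ, Finset.mem_univ γ⟩))
  exact Ideal.mem_inv_pointwise_smul_iff.mp (hle he)

theorem asIdeal_gammaDot (γ : G) (x : MaximalSpectrum R) :
    (gammaDot R G γ x).asIdeal = γ • x.asIdeal := by
  rw [Ideal.pointwise_smul_eq_comap]
  rfl

theorem smul_idealOf (γ : G) (η : MaximalSpectrum R →₀ ℕ) :
    γ • idealOf η = ∏ x ∈ η.support, (gammaDot R G γ x).asIdeal ^ η x := by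
  simp only [idealOf, Finset.smul_prod', smul_pow', asIdeal_gammaDot]

theorem isCoprime_idealOf_smul
    (hfree : ∀ γ : G, γ ≠ 1 → ∀ x : MaximalSpectrum R, gammaDot R G γ x ≠ x)
    {η : MaximalSpectrum R →₀ ℕ} (hη : NoTwoInOrbit R G η.support) {γ : G} (hγ : γ ≠ 1) :
    IsCoprime (idealOf η) (γ • idealOf η) := by
  rw [smul_idealOf, idealOf]
  refine IsCoprime.prod_left fun x hx => IsCoprime.prod_right fun y hy => IsCoprime.pow ?_
  refine Ideal.isCoprime_iff_sup_eq.mpr (x.isMaximal.coprime_of_ne (gammaDot R G γ y).isMaximal ?_)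
  intro hxy
  have hyx : gammaDot R G γ y = x := MaximalSpectrum.ext hxy.symm
  obtain rfl := hη y hy x hx γ hyx
  exact hfree γ hγ y hyx

end IdealTranslates

section Averaging

variable {K R 𝔤 G : Type*} [Field K] [CommRing R] [Algebra K R] [LieRing 𝔤] [LieAlgebra K 𝔤]
  [CommGroup G] [MulSemiringAction G R] [SMulCommClass G K R]
  [DistribMulAction G 𝔤] [SMulCommClass G K 𝔤]

@[simp]
theorem diagMap_tmul (γ : G) (a : R) (v : 𝔤) :
    diagMap K R 𝔤 G γ (a ⊗ₜ v) = (γ • a) ⊗ₜ (γ • v) :=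
  rfl

theorem diagMap_mul_apply (γ δ : G) (z : R ⊗[K] 𝔤) :
    diagMap K R 𝔤 G (γ * δ) z = diagMap K R 𝔤 G γ (diagMap K R 𝔤 G δ z) := by
  induction z using TensorProduct.induction_on with
  | zero => simp
  | tmul a v => simp [mul_smul]
  | add z w hz hw => simp only [map_add, hz, hw]

theorem diagMap_one_apply (z : R ⊗[K] 𝔤) : diagMap K R 𝔤 G 1 z = z := by
  induction z using TensorProduct.induction_on with
  | zero => simp
  | tmul a v => simp
  | add z w hz hw => simp only [map_add, hz, hw]

theorem diagMap_smul (γ : G) (a : R) (z : R ⊗[K] 𝔤) :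
    diagMap K R 𝔤 G γ (a • z) = (γ • a) • diagMap K R 𝔤 G γ z := by
  induction z using TensorProduct.induction_on with
  | zero => simp
  | tmul b v => simp [TensorProduct.smul_tmul', smul_mul']
  | add z w hz hw => simp only [smul_add, map_add, hz, hw]

theorem smul_mem_gT {I : Ideal R} {a : R} (ha : a ∈ I) (z : R ⊗[K] 𝔤) : a • z ∈ gT K R 𝔤 I := by
  induction z using TensorProduct.induction_on with
  | zero => rw [smul_zero]; exact (gT K R 𝔤 I).zero_mem
  | tmul b v =>
    exact Submodule.subset_span ⟨a * b, I.mul_mem_right b ha, v, TensorProduct.smul_tmul' a b v⟩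
  | add z w hz hw => simpa only [smul_add] using (gT K R 𝔤 I).add_mem hz hw

theorem sum_diagMap_mem_fixedSub [Fintype G] (z : R ⊗[K] 𝔤) :
    ∑ γ : G, diagMap K R 𝔤 G γ z ∈ fixedSub K R 𝔤 G := by
  simp only [fixedSub, Submodule.mem_iInf, LinearMap.mem_ker, LinearMap.sub_apply,
    LinearMap.id_apply, sub_eq_zero]
  intro δ
  simp only [map_sum, ← diagMap_mul_apply]
  exact Fintype.sum_bijective (δ * ·) (Group.mulLeft_bijective δ) _ _ fun _ => rfl

theorem exists_mem_fixedSub_sub_mem_gT [Fintype G] {I : Ideal R} {e : R} (he : e - 1 ∈ I)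
    (hsmul : ∀ γ : G, γ ≠ 1 → γ • e ∈ I) (z : R ⊗[K] 𝔤) :
    ∃ w ∈ fixedSub K R 𝔤 G, w - z ∈ gT K R 𝔤 I := by
  classical
  refine ⟨∑ γ : G, diagMap K R 𝔤 G γ (e • z), sum_diagMap_mem_fixedSub _, ?_⟩
  have hsplit : ∑ γ : G, diagMap K R 𝔤 G γ (e • z) - z =
      (e - 1) • z + ∑ γ ∈ Finset.univ.erase 1, (γ • e) • diagMap K R 𝔤 G γ z := by
    rw [← Finset.add_sum_erase _ _ (Finset.mem_univ 1), diagMap_one_apply, sub_smul, one_smul]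
    simp only [diagMap_smul]
    abel
  rw [hsplit]
  exact (gT K R 𝔤 I).add_mem (smul_mem_gT he z) <| Submodule.sum_mem _ fun γ hγ =>
    smul_mem_gT (hsmul γ (Finset.ne_of_mem_erase hγ)) _

end Averaging

theorem LieSubalgebra.exists_lieEquiv_quotient_of_surjective {R L : Type*} [CommRing R]
    [LieRing L] [LieAlgebra R L] {L' : LieSubalgebra R L} {I : LieIdeal R L}
    {J : LieIdeal R L'} (hJ : ∀ y : L', y ∈ J ↔ (y : L) ∈ I)
    (hsurj : Function.Surjective fun y : L' => LieSubmodule.Quotient.mk' I (y : L)) :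
    ∃ e : (L' ⧸ J) ≃ₗ⁅R⁆ L ⧸ I, ∀ y : L',
      e (LieSubmodule.Quotient.mk' J y) = LieSubmodule.Quotient.mk' I (y : L) := by
  let f : L' →ₗ⁅R⁆ L ⧸ I :=
    { (LieSubmodule.Quotient.mk' I : L →ₗ[R] L ⧸ I) ∘ₗ (L'.incl : L' →ₗ[R] L) with
      map_lie' := fun {x y} => LieSubmodule.Quotient.mk_bracket I x y }
  obtain rfl : J = f.ker := by
    ext y
    rw [LieHom.mem_ker, hJ]
    exact (LieSubmodule.Quotient.mk_eq_zero _).symm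
  have hrange : (f.range : Set (L ⧸ I)) = (⊤ : LieSubalgebra R (L ⧸ I)) := by
    rw [(f.range_eq_top).mpr hsurj]
  exact ⟨f.quotKerEquivRange.trans ((LieEquiv.ofEq _ _ hrange).trans LieSubalgebra.topEquiv),
    fun y => rfl⟩

/-- Proposition 2.2 of the paper.  If `η : X_rat → ℕ` is finitely supported
with support contained in an element of `X_*`, then the restriction of the generalized
evaluation map `ev_η : g ⊗ A → (g ⊗ A)/(g ⊗ I_η)` to `(g ⊗ A)^Γ` is surjective and induces
a Lie algebra isomorphism `(g ⊗ A)^Γ/(g ⊗ I_η)^Γ ≅ (g ⊗ A)/(g ⊗ I_η)`. -/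
theorem statement1
    (hbr : ∀ (γ : Γ) (x y : g), γ • ⁅x, y⁆ = ⁅γ • x, γ • y⁆)
    (hfree : ∀ γ : Γ, γ ≠ 1 → ∀ x : MaximalSpectrum A, gammaDot A Γ γ x ≠ x)
    (η : MaximalSpectrum A →₀ ℕ)
    (hη : NoTwoInOrbit A Γ η.support) :
    Function.Surjective (fun y : ↥(fixedLie k A g Γ hbr) =>
      LieSubmodule.Quotient.mk' (gTLie k A g (idealOf η)) (y : A ⊗[k] g)) ∧
    ∃ e : (↥(fixedLie k A g Γ hbr) ⧸ fixedIdealOf hbr (idealOf η)) ≃ₗ⁅k⁆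
        ((A ⊗[k] g) ⧸ gTLie k A g (idealOf η)),
      ∀ y : ↥(fixedLie k A g Γ hbr),
        e (LieSubmodule.Quotient.mk' (fixedIdealOf hbr (idealOf η)) y) =
          LieSubmodule.Quotient.mk' (gTLie k A g (idealOf η)) (y : A ⊗[k] g) := by
  obtain ⟨e, he, hsmul⟩ :=
    Ideal.exists_sub_one_mem_and_smul_mem fun γ hγ => isCoprime_idealOf_smul hfree hη hγ
  have hsurj : Function.Surjective fun y : ↥(fixedLie k A g Γ hbr) =>
      LieSubmodule.Quotient.mk' (gTLie k A g (idealOf η)) (y : A ⊗[k] g) := by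
    intro q
    obtain ⟨z, rfl⟩ := LieSubmodule.Quotient.surjective_mk' _ q
    obtain ⟨w, hw, hwz⟩ := exists_mem_fixedSub_sub_mem_gT he hsmul z
    exact ⟨⟨w, hw⟩, (Submodule.Quotient.eq _).mpr hwz⟩
  exact ⟨hsurj, LieSubalgebra.exists_lieEquiv_quotient_of_surjective (fun _ => Iff.rfl) hsurj⟩

end
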